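/- arXiv:1511.07734 — 2 statements merged into one kernel-verified Lean document; each statement's English description precedes it below -/
import Mathlib

section
/- Let p ∈ (1/2, 1). The generating function G : [0,1]^ℕ → [0,1]^ℕ defined by G(z)(n) = p·z(n+1)² + (1−p) has uncountably many fixed points. More precisely, for every c ∈ [(1−p)/p, 1] there exists a unique fixed point z of G with z(0) = c, and distinct values of c give distinct fixed points. -/
/-!
A fixed point of `G` is a sequence with `z n = p * z (n + 1) ^ 2 + (1 - p)`. Since the entries are
nonnegative, `z (n + 1) = √((z n - (1 - p)) / p)` is determined by `z n`, so a fixed point is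
determined by `z 0`. Conversely this square-root map is monotone and fixes both `(1 - p) / p` and `1`,
so it maps `[(1 - p) / p, 1]` into itself, and iterating it from any `c` in that interval produces a
fixed point with `z 0 = c`. For `p > 1/2` the interval is nondegenerate, hence uncountable.
-/

open Set

/-- The inverse of `y ↦ p * y ^ 2 + (1 - p)` on `[0, ∞)`. -/
noncomputable def invQuad (p x : ℝ) : ℝ := √((x - (1 - p)) / p)

section

variable {p : ℝ}

theorem invQuad_eq_of_eq (hp : p ≠ 0) {x y : ℝ} (hy : 0 ≤ y) (hx : x = p * y ^ 2 + (1 - p)) :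
    invQuad p x = y := by
  rw [invQuad, hx, show (p * y ^ 2 + (1 - p) - (1 - p)) / p = y ^ 2 by field_simp; ring,
    Real.sqrt_sq hy]

theorem eq_invQuad_sq (hp : 0 < p) {x : ℝ} (hx : 1 - p ≤ x) :
    x = p * invQuad p x ^ 2 + (1 - p) := by
  rw [invQuad, Real.sq_sqrt (div_nonneg (by linarith) hp.le)]
  field_simp
  ring

theorem invQuad_monotone (hp : 0 < p) : Monotone (invQuad p) := fun _ _ hxy =>
  Real.sqrt_le_sqrt (div_le_div_of_nonneg_right (by linarith) hp.le)

theorem invQuad_one (hp : p ≠ 0) : invQuad p 1 = 1 :=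
  invQuad_eq_of_eq hp zero_le_one (by ring)

theorem invQuad_one_sub_div (hp : 0 < p) (hp1 : p ≤ 1) : invQuad p ((1 - p) / p) = (1 - p) / p :=
  invQuad_eq_of_eq hp.ne' (div_nonneg (by linarith) hp.le) (by field_simp; ring)

theorem mapsTo_invQuad_Icc (hp : 0 < p) (hp1 : p ≤ 1) :
    MapsTo (invQuad p) (Icc ((1 - p) / p) 1) (Icc ((1 - p) / p) 1) := fun _ hx =>
  ⟨invQuad_one_sub_div hp hp1 ▸ invQuad_monotone hp hx.1, invQuad_one hp.ne' ▸ invQuad_monotone hp hx.2⟩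

theorem eq_iterate_invQuad (hp : p ≠ 0) {z : ℕ → ℝ} (hz : ∀ n, 0 ≤ z n)
    (hrec : ∀ n, z n = p * z (n + 1) ^ 2 + (1 - p)) : z = fun n => (invQuad p)^[n] (z 0) := by
  funext n
  induction n with
  | zero => rfl
  | succ n ih =>
    rw [Function.iterate_succ_apply', ← ih, invQuad_eq_of_eq hp (hz (n + 1)) (hrec n)]

theorem iterate_invQuad_isFixedPoint (hp : 0 < p) (hp1 : p ≤ 1) {c : ℝ}
    (hc : c ∈ Icc ((1 - p) / p) 1) :
    (∀ n, (invQuad p)^[n] c ∈ Icc (0 : ℝ) 1) ∧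
      ∀ n, (invQuad p)^[n] c = p * (invQuad p)^[n + 1] c ^ 2 + (1 - p) := by
  have hmem : ∀ n, (invQuad p)^[n] c ∈ Icc ((1 - p) / p) 1 :=
    fun n => (mapsTo_invQuad_Icc hp hp1).iterate n hc
  have hlower : 0 ≤ (1 - p) / p := div_nonneg (by linarith) hp.le
  have hlower' : 1 - p ≤ (1 - p) / p := (le_div_iff₀ hp).2 (by nlinarith)
  refine ⟨fun n => ⟨hlower.trans (hmem n).1, (hmem n).2⟩, fun n => ?_⟩
  rw [Function.iterate_succ_apply']
  exact eq_invQuad_sq hp (hlower'.trans (hmem n).1)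

end

theorem stmt_4 (p : ℝ) (hp : p ∈ Set.Ioo (1/2 : ℝ) 1) :
    ¬ Set.Countable {z : ℕ → ℝ | (∀ n, z n ∈ Set.Icc (0:ℝ) 1) ∧
        ∀ n, z n = p * (z (n + 1)) ^ 2 + (1 - p)} ∧
    (∀ c ∈ Set.Icc ((1 - p) / p) 1,
      ∃! z : ℕ → ℝ, (∀ n, z n ∈ Set.Icc (0:ℝ) 1) ∧
        (∀ n, z n = p * (z (n + 1)) ^ 2 + (1 - p)) ∧ z 0 = c) ∧
    (∀ c c' : ℝ, c ∈ Set.Icc ((1 - p) / p) 1 → c' ∈ Set.Icc ((1 - p) / p) 1 → c ≠ c' →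
      ∀ z z' : ℕ → ℝ,
        ((∀ n, z n ∈ Set.Icc (0:ℝ) 1) ∧ (∀ n, z n = p * (z (n + 1)) ^ 2 + (1 - p)) ∧ z 0 = c) →
        ((∀ n, z' n ∈ Set.Icc (0:ℝ) 1) ∧ (∀ n, z' n = p * (z' (n + 1)) ^ 2 + (1 - p)) ∧ z' 0 = c') →
        z ≠ z') := by
  obtain ⟨hp_half, hp1⟩ := hp
  have hp0 : 0 < p := by linarith
  refine ⟨fun hcount => ?_, fun c hc => ?_, ?_⟩
  · have hsub : Icc ((1 - p) / p) 1 ⊆ (fun z : ℕ → ℝ => z 0) '' {z | (∀ n, z n ∈ Icc (0:ℝ) 1) ∧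
        ∀ n, z n = p * z (n + 1) ^ 2 + (1 - p)} := fun c hc =>
      ⟨fun n => (invQuad p)^[n] c, iterate_invQuad_isFixedPoint hp0 hp1.le hc, rfl⟩
    have hlt : (1 - p) / p < 1 := (div_lt_one hp0).2 (by linarith)
    exact (Cardinal.Real.Icc_countable_iff.1 ((hcount.image _).mono hsub)).not_gt hlt
  · obtain ⟨hmem, hfix⟩ := iterate_invQuad_isFixedPoint hp0 hp1.le hc
    refine ⟨fun n => (invQuad p)^[n] c, ⟨hmem, hfix, rfl⟩, ?_⟩
    rintro z ⟨hz, hrec, rfl⟩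
    exact eq_iterate_invQuad hp0.ne' (fun n => (hz n).1) hrec
  · rintro c c' - - hne z z' ⟨-, -, rfl⟩ ⟨-, -, rfl⟩ heq
    exact hne (congrFun heq 0)
end

section
/- Let p, ε be real numbers with 0 < ε, 2p − ε > 1, p < 1/√2, and consider real sequences satisfying z(1) = √(((1−ε)z(0) − (1−p))/(p−ε)) and z(n+1) = √((z(n) − ε·z(n−1) − (1−p))/(p−ε)) for n ≥ 1. If z(0) ∈ ((1−p)/(p−ε), 1), then for all n ≥ 1: z(n) > z(n−1), z(n) ∈ ((1−p)/(p−ε), 1), and 1 − z(n) > (1 − z(n−1))/(2p). -/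
/-!
Write `a = (1 - p) / (p - ε)` and `S = (x - ε y - (1 - p)) / (p - ε)`, so that the next term is
`√S`. Since `(p - ε) t² - (1 - ε) t + (1 - p) = (p - ε)(t - a)(t - 1)`, for `y ≤ x ∈ (a, 1)` we
get `x² < S`, so the sequence increases. Moreover `1 - S = ((1 - x) - ε (1 - y)) / (p - ε)`, and as
long as `1 - x > p (1 - y)` this gives `1 - √S ≥ (1 - S) / 2 > (1 - x) / (2p)`, which keeps
`√S < 1`. Finally `2p² < 1` means `1 / (2p) > p`, so the gap estimate reproduces the hypothesis
`1 - x > p (1 - y)` one step later.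
-/

open Real Set

noncomputable def radicand (p ε x y : ℝ) : ℝ := (x - ε * y - (1 - p)) / (p - ε)

lemma one_sub_le_two_mul_one_sub_sqrt {S : ℝ} (hS : 0 ≤ S) : 1 - S ≤ 2 * (1 - √S) := by
  nlinarith [sq_nonneg (1 - √S), sq_sqrt hS]

lemma mul_lt_div_two_mul {p t : ℝ} (hp : 0 < p) (hp2 : 2 * p ^ 2 < 1) (ht : 0 < t) :
    p * t < t / (2 * p) := by
  rw [lt_div_iff₀ (by positivity)]
  nlinarith

section Radicand

variable {p ε x y : ℝ}

lemma one_sub_radicand (hd : 0 < p - ε) :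
    1 - radicand p ε x y = ((1 - x) - ε * (1 - y)) / (p - ε) := by
  rw [radicand]
  field_simp
  ring

lemma sq_lt_radicand (hε : 0 < ε) (hd : 0 < p - ε) (hx : x ∈ Ioo ((1 - p) / (p - ε)) 1)
    (hyx : y ≤ x) : x ^ 2 < radicand p ε x y := by
  obtain ⟨hax, hx1⟩ := hx
  have hax' : 1 - p < (p - ε) * x := by rwa [div_lt_iff₀' hd] at hax
  rw [radicand, lt_div_iff₀ hd]
  nlinarith [mul_pos (sub_pos.mpr hx1) (sub_pos.mpr hax'), mul_le_mul_of_nonneg_left hyx hε.le]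

lemma div_lt_one_sub_radicand (hε : 0 < ε) (hd : 0 < p - ε) (hp : 0 < p)
    (hcontr : p * (1 - y) < 1 - x) :
    (1 - x) / (2 * p) < (1 - radicand p ε x y) / 2 := by
  rw [one_sub_radicand hd, div_div, div_lt_div_iff₀ (by positivity) (by positivity)]
  nlinarith [mul_lt_mul_of_pos_left hcontr hε]

theorem sqrt_radicand_spec (hε : 0 < ε) (hd : 0 < p - ε) (hp : 0 < p)
    (hx : x ∈ Ioo ((1 - p) / (p - ε)) 1) (hyx : y ≤ x) (hcontr : p * (1 - y) < 1 - x) :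
    x < √(radicand p ε x y) ∧ √(radicand p ε x y) ∈ Ioo ((1 - p) / (p - ε)) 1 ∧
      (1 - x) / (2 * p) < 1 - √(radicand p ε x y) := by
  have hsq := sq_lt_radicand hε hd hx hyx
  have hS0 : 0 ≤ radicand p ε x y := (sq_nonneg x).trans hsq.le
  have hlt : x < √(radicand p ε x y) := lt_sqrt_of_sq_lt hsq
  have hgap : (1 - x) / (2 * p) < 1 - √(radicand p ε x y) := by
    linarith [div_lt_one_sub_radicand hε hd hp hcontr, one_sub_le_two_mul_one_sub_sqrt hS0]
  have hgap0 : 0 < (1 - x) / (2 * p) := div_pos (sub_pos.mpr hx.2) (by positivity)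
  exact ⟨hlt, ⟨hx.1.trans hlt, by linarith⟩, hgap⟩

end Radicand

theorem stmt_5 (p ε : ℝ) (hε : 0 < ε) (h1 : 2 * p - ε > 1) (h2 : p < 1 / Real.sqrt 2)
    (z : ℕ → ℝ) (h0 : z 0 ∈ Set.Ioo ((1 - p) / (p - ε)) 1)
    (hrec1 : z 1 = Real.sqrt (((1 - ε) * z 0 - (1 - p)) / (p - ε)))
    (hrec : ∀ n : ℕ, 1 ≤ n →
      z (n + 1) = Real.sqrt ((z n - ε * z (n - 1) - (1 - p)) / (p - ε))) :
    ∀ n : ℕ, 1 ≤ n →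
      z n > z (n - 1) ∧ z n ∈ Set.Ioo ((1 - p) / (p - ε)) 1 ∧
      1 - z n > (1 - z (n - 1)) / (2 * p) := by
  have hp : 0 < p := by linarith
  have hp2 : 2 * p ^ 2 < 1 := by
    rw [lt_one_div hp (by positivity), lt_div_iff₀ hp] at h2
    nlinarith [sq_sqrt (zero_le_two : (0 : ℝ) ≤ 2), sqrt_nonneg 2]
  have hd : 0 < p - ε := by nlinarith
  intro n hn
  induction n, hn using Nat.le_induction with
  | base =>
    have hz1 : z 1 = √(radicand p ε (z 0) (z 0)) := by rw [hrec1, radicand]; ring_nf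
    rw [hz1]
    exact sqrt_radicand_spec hε hd hp h0 le_rfl (by nlinarith [h0.2])
  | succ n hn ih =>
    obtain ⟨hmono, hz, hgap⟩ := ih
    have hcontr : p * (1 - z (n - 1)) < 1 - z n :=
      (mul_lt_div_two_mul hp hp2 (by linarith [hz.2])).trans hgap
    rw [hrec n hn]
    exact sqrt_radicand_spec hε hd hp hz hmono.le hcontr
end
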